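/- For all real a and b, ∫_{-∞}^{∞} Φ(a + b·x)² φ(x) dx = Φ(a/√(1+b²)) − 2·T(a/√(1+b²), 1/√(1+2b²)), where T is Owen's T function. -/

import Mathlib

/-!
Write `c = √(1 + b²)` and `s = √(1 + 2b²)`, and regard both sides as functions of `a`. Both tend
to `0` as `a → -∞`, so it suffices that they have the same derivative. Differentiating under the
integral sign, the left side has derivative `2 ∫ Φ(a + bx) φ(a + bx) φ(x) dx`; completing the
square turns `φ(a + bx) φ(x)` into `φ(a/c) φ(cx + ab/c)`, and after an affine change of variables
the integral becomes `c⁻¹ φ(a/c) ∫ Φ(a/c² + (b/c) y) φ(y) dy = c⁻¹ φ(a/c) Φ(a/(cs))`, using the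
identity `∫ Φ(p + qx) φ(x) dx = Φ(p/√(1 + q²))` (proved by the same derivative argument). On the
right, `∂ₕ T(h, k) = -φ(h) (Φ(hk) - 1/2)`, which gives the same derivative.
-/

open MeasureTheory Real

/-- Standard normal density. -/
noncomputable def stdPdf (x : ℝ) : ℝ := (Real.sqrt (2 * Real.pi))⁻¹ * Real.exp (-x ^ 2 / 2)

/-- Standard normal CDF. -/
noncomputable def stdCdf (t : ℝ) : ℝ := ∫ s in Set.Iic t, stdPdf s

/-- Owen's T function. -/
noncomputable def owenT (h a : ℝ) : ℝ :=
  (2 * Real.pi)⁻¹ * ∫ x in (0:ℝ)..a, Real.exp (-h ^ 2 * (1 + x ^ 2) / 2) / (1 + x ^ 2)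

/-- Standard bivariate normal density with correlation ρ. -/
noncomputable def bvnPdf (ρ x y : ℝ) : ℝ :=
  Real.exp (-(x ^ 2 - 2 * ρ * x * y + y ^ 2) / (2 * (1 - ρ ^ 2))) /
    (2 * Real.pi * Real.sqrt (1 - ρ ^ 2))

/-- Standard bivariate normal CDF with correlation ρ. -/
noncomputable def bvn (u v ρ : ℝ) : ℝ :=
  ∫ p : ℝ × ℝ in Set.Iic u ×ˢ Set.Iic v, bvnPdf ρ p.1 p.2

/-- General bivariate Gaussian density with means μ₁ μ₂, std devs σ₁ σ₂, covariance σ₁₂. -/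
noncomputable def biGaussPdf (μ₁ μ₂ σ₁ σ₂ σ₁₂ x y : ℝ) : ℝ :=
  Real.exp (-(σ₂ ^ 2 * (x - μ₁) ^ 2 - 2 * σ₁₂ * (x - μ₁) * (y - μ₂) + σ₁ ^ 2 * (y - μ₂) ^ 2) /
      (2 * (σ₁ ^ 2 * σ₂ ^ 2 - σ₁₂ ^ 2))) /
    (2 * Real.pi * Real.sqrt (σ₁ ^ 2 * σ₂ ^ 2 - σ₁₂ ^ 2))

open ProbabilityTheory Set Filter Topology

lemma stdPdf_eq_gaussianPDFReal : stdPdf = gaussianPDFReal 0 1 := by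
  ext x
  simp [stdPdf, gaussianPDFReal]

lemma norm_stdPdf_le (x : ℝ) : ‖stdPdf x‖ ≤ (√(2 * π))⁻¹ := by
  rw [stdPdf, norm_mul, norm_inv, Real.norm_of_nonneg (sqrt_nonneg _),
    Real.norm_of_nonneg (exp_pos _).le]
  exact mul_le_of_le_one_right (by positivity) (exp_le_one_iff.2 (by nlinarith [sq_nonneg x]))

lemma stdPdf_neg (x : ℝ) : stdPdf (-x) = stdPdf x := by simp [stdPdf]

lemma continuous_stdPdf : Continuous stdPdf := by unfold stdPdf; fun_prop

lemma integrable_stdPdf : Integrable stdPdf := by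
  rw [stdPdf_eq_gaussianPDFReal]; exact integrable_gaussianPDFReal _ _

lemma integral_stdPdf : ∫ x, stdPdf x = 1 := by
  rw [stdPdf_eq_gaussianPDFReal]; exact integral_gaussianPDFReal_eq_one _ one_ne_zero

lemma stdCdf_eq_cdf_gaussianReal : stdCdf = cdf (gaussianReal 0 1) := by
  ext t
  rw [cdf_eq_real, measureReal_def, gaussianReal_apply_eq_integral _ one_ne_zero,
    ENNReal.toReal_ofReal
      (setIntegral_nonneg measurableSet_Iic fun x _ => gaussianPDFReal_nonneg _ _ _),
    stdCdf, stdPdf_eq_gaussianPDFReal]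

lemma norm_stdCdf_le_one (t : ℝ) : ‖stdCdf t‖ ≤ 1 := by
  rw [stdCdf_eq_cdf_gaussianReal, Real.norm_of_nonneg (cdf_nonneg _ _)]
  exact cdf_le_one _ _

lemma tendsto_stdCdf_atBot : Tendsto stdCdf atBot (𝓝 0) := by
  rw [stdCdf_eq_cdf_gaussianReal]; exact tendsto_cdf_atBot _

lemma stdCdf_zero : stdCdf 0 = 1 / 2 := by
  have hsplit := intervalIntegral.integral_Iic_add_Ioi (b := 0) integrable_stdPdf.integrableOn
    integrable_stdPdf.integrableOn
  have hsymm : ∫ x in Ioi 0, stdPdf x = stdCdf 0 := by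
    rw [stdCdf]; simpa [stdPdf_neg] using (integral_comp_neg_Iic 0 stdPdf).symm
  rw [hsymm, integral_stdPdf] at hsplit
  unfold stdCdf at *; linarith

lemma stdCdf_sub_one_half (t : ℝ) : stdCdf t - 1 / 2 = ∫ u in (0 : ℝ)..t, stdPdf u := by
  rw [← stdCdf_zero, stdCdf, stdCdf, intervalIntegral.integral_Iic_sub_Iic
    integrable_stdPdf.integrableOn integrable_stdPdf.integrableOn]

lemma hasDerivAt_stdCdf (t : ℝ) : HasDerivAt stdCdf (stdPdf t) t := by
  have hd := intervalIntegral.integral_hasDerivAt_right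
    (integrable_stdPdf.intervalIntegrable (a := 0) (b := t))
    (continuous_stdPdf.stronglyMeasurableAtFilter _ _) continuous_stdPdf.continuousAt
  refine (hd.const_add (1 / 2)).congr_of_eventuallyEq (Eventually.of_forall fun s => ?_)
  simp only [← stdCdf_sub_one_half]; ring

lemma continuous_stdCdf : Continuous stdCdf :=
  continuous_iff_continuousAt.2 fun t => (hasDerivAt_stdCdf t).continuousAt

section GaussianSmoothing

variable {g g' w : ℝ → ℝ} {C C' : ℝ}

lemma integrable_comp_add_mul_mul (hg : Continuous g) (hgC : ∀ y, ‖g y‖ ≤ C)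
    (hw : Integrable w) (p q : ℝ) : Integrable fun x => g (p + q * x) * w x :=
  hw.bdd_mul (hg.comp (by fun_prop)).aestronglyMeasurable (ae_of_all _ fun _ => hgC _)

lemma hasDerivAt_integral_comp_add_mul_mul (hg : ∀ y, HasDerivAt g (g' y) y)
    (hg' : Continuous g') (hgC : ∀ y, ‖g y‖ ≤ C) (hg'C : ∀ y, ‖g' y‖ ≤ C') (hw : Integrable w)
    (q p : ℝ) : HasDerivAt (fun p => ∫ x, g (p + q * x) * w x) (∫ x, g' (p + q * x) * w x) p := by
  have hgc : Continuous g := continuous_iff_continuousAt.2 fun y => (hg y).continuousAt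
  refine (hasDerivAt_integral_of_dominated_loc_of_deriv_le (bound := fun x => C' * ‖w x‖)
    (F := fun p x => g (p + q * x) * w x) (F' := fun p x => g' (p + q * x) * w x)
    univ_mem (Eventually.of_forall fun p =>
      (integrable_comp_add_mul_mul hgc hgC hw p q).aestronglyMeasurable)
    (integrable_comp_add_mul_mul hgc hgC hw p q)
    (integrable_comp_add_mul_mul hg' hg'C hw p q).aestronglyMeasurable
    (ae_of_all _ fun x p _ => ?_) (hw.norm.const_mul C') (ae_of_all _ fun x p _ => ?_)).2
  · rw [norm_mul]; exact mul_le_mul_of_nonneg_right (hg'C _) (norm_nonneg _)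
  · simpa using ((hg (p + q * x)).comp p ((hasDerivAt_id p).add_const (q * x))).mul_const (w x)

lemma tendsto_integral_comp_add_mul_mul_atBot (hg : Continuous g) (hgC : ∀ y, ‖g y‖ ≤ C)
    (hg0 : Tendsto g atBot (𝓝 0)) (hw : Integrable w) (q : ℝ) :
    Tendsto (fun p => ∫ x, g (p + q * x) * w x) atBot (𝓝 0) := by
  simpa using tendsto_integral_filter_of_dominated_convergence (fun x => C * ‖w x‖)
    (Eventually.of_forall fun p =>
      (integrable_comp_add_mul_mul hg hgC hw p q).aestronglyMeasurable)
    (Eventually.of_forall fun p => ae_of_all _ fun x => by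
      rw [norm_mul]; exact mul_le_mul_of_nonneg_right (hgC _) (norm_nonneg _))
    (hw.norm.const_mul C)
    (ae_of_all _ fun x =>
      (hg0.comp (tendsto_atBot_add_const_right _ (q * x) tendsto_id)).mul_const (w x))

end GaussianSmoothing

lemma eq_of_hasDerivAt_of_tendsto_atBot {f g f' : ℝ → ℝ} {l : ℝ}
    (hf : ∀ x, HasDerivAt f (f' x) x) (hg : ∀ x, HasDerivAt g (f' x) x)
    (hfl : Tendsto f atBot (𝓝 l)) (hgl : Tendsto g atBot (𝓝 l)) : f = g := by
  have hconst : ∀ x, f x - g x = f 0 - g 0 := fun x =>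
    is_const_of_deriv_eq_zero (f := fun x => f x - g x)
      (fun y => ((hf y).sub (hg y)).differentiableAt)
      (fun y => ((hf y).sub (hg y)).deriv.trans (sub_self _)) x 0
  have hlim := hfl.sub hgl
  rw [sub_self, funext hconst] at hlim
  ext x
  linarith [hconst x, tendsto_nhds_unique tendsto_const_nhds hlim]

lemma integral_comp_mul_add (g : ℝ → ℝ) (c d : ℝ) : ∫ x, g (c * x + d) = |c⁻¹| * ∫ y, g y := by
  rw [Measure.integral_comp_mul_left (fun y => g (y + d)), integral_add_right_eq_self g d,
    smul_eq_mul]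

lemma stdPdf_add_mul_mul_stdPdf (p q x : ℝ) :
    stdPdf (p + q * x) * stdPdf x =
      stdPdf (p / √(1 + q ^ 2)) * stdPdf (√(1 + q ^ 2) * x + p * q / √(1 + q ^ 2)) := by
  have hc : √(1 + q ^ 2) ^ 2 = 1 + q ^ 2 := sq_sqrt (by positivity)
  have hc0 : √(1 + q ^ 2) ≠ 0 := (sqrt_pos.2 (by positivity)).ne'
  simp only [stdPdf, mul_mul_mul_comm _ (exp _), ← exp_add]
  congr 2
  field_simp
  rw [hc]
  ring

lemma integral_stdPdf_add_mul_mul_stdPdf (p q : ℝ) :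
    ∫ x, stdPdf (p + q * x) * stdPdf x = (√(1 + q ^ 2))⁻¹ * stdPdf (p / √(1 + q ^ 2)) := by
  simp_rw [stdPdf_add_mul_mul_stdPdf p q, integral_const_mul, integral_comp_mul_add stdPdf,
    integral_stdPdf, abs_of_pos (inv_pos.2 (sqrt_pos.2 (by positivity : (0 : ℝ) < 1 + q ^ 2)))]
  ring

lemma integral_stdCdf_add_mul_mul_stdPdf (p q : ℝ) :
    ∫ x, stdCdf (p + q * x) * stdPdf x = stdCdf (p / √(1 + q ^ 2)) := by
  have hc : 0 < √(1 + q ^ 2) := sqrt_pos.2 (by positivity)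
  refine congrFun (eq_of_hasDerivAt_of_tendsto_atBot
    (f' := fun p => (√(1 + q ^ 2))⁻¹ * stdPdf (p / √(1 + q ^ 2))) (fun p => ?_) (fun p => ?_)
    (tendsto_integral_comp_add_mul_mul_atBot continuous_stdCdf norm_stdCdf_le_one
      tendsto_stdCdf_atBot integrable_stdPdf q)
    (tendsto_stdCdf_atBot.comp (tendsto_id.atBot_div_const hc))) p
  · rw [← integral_stdPdf_add_mul_mul_stdPdf]
    exact hasDerivAt_integral_comp_add_mul_mul hasDerivAt_stdCdf continuous_stdPdf
      norm_stdCdf_le_one norm_stdPdf_le integrable_stdPdf q p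
  · simpa [mul_comm] using (hasDerivAt_stdCdf _).comp p ((hasDerivAt_id p).div_const _)

lemma integral_stdCdf_mul_stdPdf_add_mul_mul_stdPdf (p q : ℝ) :
    ∫ x, stdCdf (p + q * x) * stdPdf (p + q * x) * stdPdf x =
      (√(1 + q ^ 2))⁻¹ * stdPdf (p / √(1 + q ^ 2)) *
        stdCdf (p / (√(1 + q ^ 2) * √(1 + 2 * q ^ 2))) := by
  simp_rw [mul_assoc, stdPdf_add_mul_mul_stdPdf p q]
  set c := √(1 + q ^ 2)
  have hc : 0 < c := sqrt_pos.2 (by positivity)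
  have hc2 : c ^ 2 = 1 + q ^ 2 := sq_sqrt (by positivity)
  have hsubst : ∀ x, stdCdf (p + q * x) * (stdPdf (p / c) * stdPdf (c * x + p * q / c)) =
      stdPdf (p / c) *
        (fun y => stdCdf (p / c ^ 2 + q / c * y) * stdPdf y) (c * x + p * q / c) := by
    intro x
    rw [mul_left_comm]
    congr 3
    field_simp
    rw [hc2]
    ring
  have hscale : √(1 + (q / c) ^ 2) = √(1 + 2 * q ^ 2) / c := by
    rw [div_pow, hc2, ← sqrt_sq hc.le, ← sqrt_div (by positivity), sq_sqrt (by positivity)]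
    congr 1
    field_simp
    ring
  rw [integral_congr_ae (ae_of_all _ hsubst), integral_const_mul,
    integral_comp_mul_add (fun y => stdCdf (p / c ^ 2 + q / c * y) * stdPdf y),
    integral_stdCdf_add_mul_mul_stdPdf, hscale, abs_of_pos (inv_pos.2 hc)]
  field_simp

lemma stdPdf_mul_stdPdf_mul (h x : ℝ) :
    stdPdf h * stdPdf (h * x) = (2 * π)⁻¹ * exp (-h ^ 2 * (1 + x ^ 2) / 2) := by
  rw [stdPdf, stdPdf, mul_mul_mul_comm, ← mul_inv, mul_self_sqrt (by positivity), ← exp_add]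
  ring_nf

lemma hasDerivAt_owenT_left (h k : ℝ) :
    HasDerivAt (fun h => owenT h k) (-(stdPdf h * (stdCdf (h * k) - 1 / 2))) h := by
  have hpos : ∀ x : ℝ, 0 < 1 + x ^ 2 := fun x => by positivity
  have hcont : ∀ h : ℝ, Continuous fun x : ℝ => exp (-h ^ 2 * (1 + x ^ 2) / 2) / (1 + x ^ 2) :=
    fun h => Continuous.div (by fun_prop) (by fun_prop) fun x => (hpos x).ne'
  have key := intervalIntegral.hasDerivAt_integral_of_dominated_loc_of_deriv_le (a := 0) (b := k)
    (μ := volume) (F := fun h x => exp (-h ^ 2 * (1 + x ^ 2) / 2) / (1 + x ^ 2))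
    (F' := fun h x => -h * exp (-h ^ 2 * (1 + x ^ 2) / 2)) (bound := fun _ => |h| + 1)
    (Metric.ball_mem_nhds h one_pos)
    (Eventually.of_forall fun h => (hcont h).aestronglyMeasurable)
    ((hcont h).intervalIntegrable _ _) (by fun_prop : Continuous _).aestronglyMeasurable
    (ae_of_all _ fun x _ h' hh' => ?_) intervalIntegrable_const
    (ae_of_all _ fun x _ h' _ => ?_)
  · refine (key.2.const_mul (2 * π)⁻¹).congr_deriv ?_
    -- the `h`-derivative of the integrand is `-2π φ(h) · h φ(hx)`, and `∫₀ᵏ h φ(hx) dx = Φ(hk) - 1/2`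
    have hrepr : ∀ x,
        -h * exp (-h ^ 2 * (1 + x ^ 2) / 2) = -(2 * π) * stdPdf h * (h * stdPdf (h * x)) :=
      fun x => by
        rw [show -(2 * π) * stdPdf h * (h * stdPdf (h * x)) =
          -(2 * π) * h * (stdPdf h * stdPdf (h * x)) by ring, stdPdf_mul_stdPdf_mul]
        field_simp
    simp_rw [hrepr, intervalIntegral.integral_const_mul,
      intervalIntegral.mul_integral_comp_mul_left, mul_zero, ← stdCdf_sub_one_half]
    field_simp
  · have hh : |h'| ≤ |h| + 1 := by
      have := abs_sub_abs_le_abs_sub h' h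
      rw [Metric.mem_ball, Real.dist_eq] at hh'
      linarith
    rw [norm_mul, norm_neg, Real.norm_eq_abs, Real.norm_of_nonneg (exp_pos _).le]
    refine (mul_le_of_le_one_right (abs_nonneg _) (exp_le_one_iff.2 ?_)).trans hh
    nlinarith [hpos x, sq_nonneg h']
  · have hu : HasDerivAt (fun y : ℝ => -y ^ 2 * (1 + x ^ 2) / 2) (-h' * (1 + x ^ 2)) h' :=
      (((hasDerivAt_id' h').fun_pow 2).fun_neg.mul_const _ |>.div_const 2).congr_deriv (by ring)
    exact (hu.exp.div_const (1 + x ^ 2)).congr_deriv (by field_simp [(hpos x).ne'])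

lemma abs_owenT_le (h k : ℝ) : |owenT h k| ≤ (2 * π)⁻¹ * (exp (-h ^ 2 / 2) * |k|) := by
  rw [owenT, abs_mul, abs_of_pos (inv_pos.2 two_pi_pos)]
  have hbound : ∀ x : ℝ,
      ‖exp (-h ^ 2 * (1 + x ^ 2) / 2) / (1 + x ^ 2)‖ ≤ exp (-h ^ 2 / 2) := fun x => by
    have hx : 1 ≤ 1 + x ^ 2 := by nlinarith [sq_nonneg x]
    rw [Real.norm_of_nonneg (div_nonneg (exp_pos _).le (by positivity))]
    calc exp (-h ^ 2 * (1 + x ^ 2) / 2) / (1 + x ^ 2) ≤ exp (-h ^ 2 * (1 + x ^ 2) / 2) :=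
          div_le_self (exp_pos _).le hx
      _ ≤ exp (-h ^ 2 / 2) := exp_le_exp.2 (by nlinarith [sq_nonneg (h * x)])
  gcongr
  simpa using
    intervalIntegral.norm_integral_le_of_norm_le_const (a := 0) (b := k) fun x _ => hbound x

lemma tendsto_owenT_atBot (k : ℝ) : Tendsto (fun h => owenT h k) atBot (𝓝 0) := by
  have hsq : Tendsto (fun h : ℝ => -h ^ 2 / 2) atBot atBot := by
    refine (tendsto_neg_atTop_atBot.comp ((tendsto_pow_atTop two_ne_zero).comp
      tendsto_neg_atBot_atTop)).atBot_div_const two_pos |>.congr fun h => ?_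
    simp
  refine squeeze_zero_norm (fun h => (abs_owenT_le h k).trans_eq' rfl) ?_
  simpa using ((tendsto_exp_atBot.comp hsq).mul_const |k|).const_mul (2 * π)⁻¹

lemma hasDerivAt_stdCdf_sub_two_mul_owenT (k h : ℝ) :
    HasDerivAt (fun h => stdCdf h - 2 * owenT h k) (2 * stdPdf h * stdCdf (h * k)) h :=
  ((hasDerivAt_stdCdf h).sub ((hasDerivAt_owenT_left h k).const_mul 2)).congr_deriv (by ring)

lemma tendsto_stdCdf_sub_two_mul_owenT_atBot (k : ℝ) :
    Tendsto (fun h => stdCdf h - 2 * owenT h k) atBot (𝓝 0) := by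
  simpa using tendsto_stdCdf_atBot.sub ((tendsto_owenT_atBot k).const_mul 2)

lemma norm_stdCdf_sq_le_one (t : ℝ) : ‖stdCdf t ^ 2‖ ≤ 1 := by
  rw [norm_pow]; exact pow_le_one₀ (norm_nonneg _) (norm_stdCdf_le_one t)

lemma hasDerivAt_integral_stdCdf_sq (b t : ℝ) :
    HasDerivAt (fun t => ∫ x, stdCdf (t + b * x) ^ 2 * stdPdf x)
      (2 * ((√(1 + b ^ 2))⁻¹ * stdPdf (t / √(1 + b ^ 2)) *
        stdCdf (t / (√(1 + b ^ 2) * √(1 + 2 * b ^ 2))))) t := by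
  have hnorm : ∀ y, ‖2 * stdCdf y * stdPdf y‖ ≤ 2 * (√(2 * π))⁻¹ := fun y => by
    rw [norm_mul, norm_mul, Real.norm_two]
    have := mul_le_mul (norm_stdCdf_le_one y) (norm_stdPdf_le y) (norm_nonneg _) zero_le_one
    linarith
  refine (hasDerivAt_integral_comp_add_mul_mul (g' := fun y => 2 * stdCdf y * stdPdf y)
    (fun y => ((hasDerivAt_stdCdf y).fun_pow 2).congr_deriv (by norm_num))
    ((continuous_const.mul continuous_stdCdf).mul continuous_stdPdf) norm_stdCdf_sq_le_one hnorm
    integrable_stdPdf b t).congr_deriv ?_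
  rw [← integral_stdCdf_mul_stdPdf_add_mul_mul_stdPdf, ← integral_const_mul]
  simp only [mul_assoc]

lemma tendsto_integral_stdCdf_sq_atBot (b : ℝ) :
    Tendsto (fun t => ∫ x, stdCdf (t + b * x) ^ 2 * stdPdf x) atBot (𝓝 0) := by
  have hsq : Tendsto (fun y => stdCdf y ^ 2) atBot (𝓝 0) := by
    simpa only [zero_pow two_ne_zero] using tendsto_stdCdf_atBot.pow 2
  exact tendsto_integral_comp_add_mul_mul_atBot (continuous_stdCdf.pow 2) norm_stdCdf_sq_le_one
    hsq integrable_stdPdf b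

theorem stmt_1 (a b : ℝ) :
    ∫ x : ℝ, stdCdf (a + b * x) ^ 2 * stdPdf x =
      stdCdf (a / Real.sqrt (1 + b ^ 2)) -
        2 * owenT (a / Real.sqrt (1 + b ^ 2)) (1 / Real.sqrt (1 + 2 * b ^ 2)) := by
  have hc : 0 < √(1 + b ^ 2) := sqrt_pos.2 (by positivity)
  have hderiv : ∀ t, HasDerivAt
      (fun t => stdCdf (t / √(1 + b ^ 2)) - 2 * owenT (t / √(1 + b ^ 2)) (1 / √(1 + 2 * b ^ 2)))
      (2 * ((√(1 + b ^ 2))⁻¹ * stdPdf (t / √(1 + b ^ 2)) *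
        stdCdf (t / (√(1 + b ^ 2) * √(1 + 2 * b ^ 2))))) t := fun t =>
    ((hasDerivAt_stdCdf_sub_two_mul_owenT _ _).comp t
      ((hasDerivAt_id' t).div_const _)).congr_deriv (by field_simp)
  exact congrFun (eq_of_hasDerivAt_of_tendsto_atBot (hasDerivAt_integral_stdCdf_sq b) hderiv
    (tendsto_integral_stdCdf_sq_atBot b)
    ((tendsto_stdCdf_sub_two_mul_owenT_atBot _).comp (tendsto_id.atBot_div_const hc))) a
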